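/- In the L-type system for λυ with explicit substitutions, the updater distributes over application preserving types: if (t₁ t₂)⇑ᵢ : ℓ is derivable then (t₁⇑ᵢ)(t₂⇑ᵢ) : ℓ is derivable. Concretely, for disjoint sorted lists ℓ₁, ℓ₂: ((<i | ℓ₁‡ℓ₂) ‡ ↑(≥i | ℓ₁‡ℓ₂)) = ((<i|ℓ₁) ‡ ↑(≥i|ℓ₁)) ‡ ((<i|ℓ₂) ‡ ↑(≥i|ℓ₂)). -/

import Mathlib

/-- Partial merge of lists of naturals, failing on equal heads. -/
def merge : List ℕ → List ℕ → Option (List ℕ)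
  | [], l => some l
  | i :: l, [] => some (i :: l)
  | i₁ :: l₁, i₂ :: l₂ =>
    if i₁ < i₂ then (merge l₁ (i₂ :: l₂)).map (i₁ :: ·)
    else if i₂ < i₁ then (merge (i₁ :: l₁) l₂).map (i₂ :: ·)
    else none
termination_by l₁ l₂ => l₁.length + l₂.length

theorem merge_map (f : ℕ → ℕ) (hf : StrictMono f) :
    ∀ l₁ l₂ : List ℕ, merge (l₁.map f) (l₂.map f) = (merge l₁ l₂).map (List.map f)
  | [], l₂ => by simp [merge]
  | a :: l₁, [] => by simp [merge]
  | a :: l₁, b :: l₂ => by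
    have ih1 := merge_map f hf l₁ (b :: l₂)
    have ih2 := merge_map f hf (a :: l₁) l₂
    simp only [List.map_cons] at ih1 ih2 ⊢
    rw [merge, merge]
    simp only [hf.lt_iff_lt]
    rcases lt_trichotomy a b with hab | hab | hab
    · rw [if_pos hab, if_pos hab, ih1]
      cases merge l₁ (b :: l₂) <;> simp
    · subst hab; simp
    · rw [if_neg (by omega), if_pos hab, if_neg (by omega), if_pos hab, ih2]
      cases merge (a :: l₁) l₂ <;> simp
  termination_by l₁ l₂ => l₁.length + l₂.length

theorem merge_all_lt : ∀ l₁ l₂ : List ℕ, (∀ a ∈ l₁, ∀ b ∈ l₂, a < b) →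
    merge l₁ l₂ = some (l₁ ++ l₂)
  | [], l₂, _ => by simp [merge]
  | a :: l₁, [], _ => by simp [merge]
  | a :: l₁, b :: l₂, h => by
    rw [merge]
    have hab : a < b := h a (by simp) b (by simp)
    rw [if_pos hab, merge_all_lt l₁ (b :: l₂) (fun x hx => h x (by simp [hx]))]
    rfl

theorem mem_of_merge : ∀ l₁ l₂ l : List ℕ, merge l₁ l₂ = some l →
    ∀ x ∈ l, x ∈ l₁ ∨ x ∈ l₂
  | [], l₂, l, h => by simp [merge] at h; subst h; simp
  | a :: l₁, [], l, h => by simp [merge] at h; subst h; simp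
  | a :: l₁, b :: l₂, l, h => by
    rw [merge] at h
    intro x hx
    rcases lt_trichotomy a b with hab | hab | hab
    · rw [if_pos hab] at h
      cases hm : merge l₁ (b :: l₂) with
      | none => rw [hm] at h; simp at h
      | some l' =>
        rw [hm] at h; simp at h; subst h
        rcases List.mem_cons.1 hx with rfl | hx
        · left; simp
        · rcases mem_of_merge l₁ (b :: l₂) l' hm x hx with h' | h'
          · left; simp [h']
          · right; exact h'
    · simp [hab] at h
    · rw [if_neg (by omega), if_pos hab] at h
      cases hm : merge (a :: l₁) l₂ with
      | none => rw [hm] at h; simp at h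
      | some l' =>
        rw [hm] at h; simp at h; subst h
        rcases List.mem_cons.1 hx with rfl | hx
        · right; simp
        · rcases mem_of_merge (a :: l₁) l₂ l' hm x hx with h' | h'
          · left; exact h'
          · right; simp [h']
  termination_by l₁ l₂ => l₁.length + l₂.length

theorem merge_sorted : ∀ l₁ l₂ l : List ℕ, l₁.Pairwise (· < ·) → l₂.Pairwise (· < ·) →
    merge l₁ l₂ = some l → l.Pairwise (· < ·)
  | [], l₂, l, _, h₂, h => by simp [merge] at h; subst h; exact h₂
  | a :: l₁, [], l, h₁, _, h => by simp [merge] at h; subst h; exact h₁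
  | a :: l₁, b :: l₂, l, h₁, h₂, h => by
    rw [merge] at h
    rcases lt_trichotomy a b with hab | hab | hab
    · rw [if_pos hab] at h
      cases hm : merge l₁ (b :: l₂) with
      | none => rw [hm] at h; simp at h
      | some l' =>
        rw [hm] at h; simp at h; subst h
        refine List.pairwise_cons.2 ⟨?_, merge_sorted l₁ (b :: l₂) l'
          (List.pairwise_cons.1 h₁).2 h₂ hm⟩
        intro x hx
        rcases mem_of_merge l₁ (b :: l₂) l' hm x hx with h' | h'
        · exact (List.pairwise_cons.1 h₁).1 x h'
        · rcases List.mem_cons.1 h' with rfl | h'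
          · exact hab
          · exact hab.trans ((List.pairwise_cons.1 h₂).1 x h')
    · simp [hab] at h
    · rw [if_neg (by omega), if_pos hab] at h
      cases hm : merge (a :: l₁) l₂ with
      | none => rw [hm] at h; simp at h
      | some l' =>
        rw [hm] at h; simp at h; subst h
        refine List.pairwise_cons.2 ⟨?_, merge_sorted (a :: l₁) l₂ l'
          h₁ (List.pairwise_cons.1 h₂).2 hm⟩
        intro x hx
        rcases mem_of_merge (a :: l₁) l₂ l' hm x hx with h' | h'
        · rcases List.mem_cons.1 h' with rfl | h'
          · exact hab
          · exact hab.trans ((List.pairwise_cons.1 h₁).1 x h')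
        · exact (List.pairwise_cons.1 h₂).1 x h'
  termination_by l₁ l₂ => l₁.length + l₂.length

theorem filter_split (i : ℕ) : ∀ l : List ℕ, l.Pairwise (· < ·) →
    l.filter (fun x => decide (x < i)) ++ l.filter (fun x => decide (i ≤ x)) = l
  | [], _ => rfl
  | a :: l, hl => by
    rcases List.pairwise_cons.1 hl with ⟨ha, hl'⟩
    by_cases h : a < i
    · simp only [List.filter_cons, decide_eq_true h, if_pos, cond_true,
        (by simp; omega : decide (i ≤ a) = false), cond_false]
      simpa using filter_split i l hl'
    · have h1 : l.filter (fun x => decide (x < i)) = [] := by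
        apply List.filter_eq_nil_iff.2
        intro x hx
        have := ha x hx
        simp; omega
      have h2 : (a :: l).filter (fun x => decide (x < i)) = [] := by
        simp [List.filter_cons, h1]; omega
      have h3 : (a :: l).filter (fun x => decide (i ≤ x)) = a :: l := by
        apply List.filter_eq_self.2
        intro x hx
        rcases List.mem_cons.1 hx with rfl | hx
        · simp; omega
        · have := ha x hx; simp; omega
      rw [h2, h3]; rfl

theorem upd_eq (i : ℕ) (l : List ℕ) (hl : l.Pairwise (· < ·)) :
    merge (l.filter (fun x => decide (x < i)))
      ((l.filter (fun x => decide (i ≤ x))).map (· + 1)) =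
    some (l.map (fun x => if x < i then x else x + 1)) := by
  have e1 : (l.filter (fun x => decide (x < i))).map
      (fun x => if x < i then x else x + 1) = l.filter (fun x => decide (x < i)) := by
    refine (List.map_congr_left fun x hx => ?_).trans (List.map_id _)
    have := List.of_mem_filter hx
    simp at this
    simp [this]
  have e2 : (l.filter (fun x => decide (i ≤ x))).map
      (fun x => if x < i then x else x + 1) =
      (l.filter (fun x => decide (i ≤ x))).map (· + 1) := by
    refine List.map_congr_left fun x hx => ?_
    have := List.of_mem_filter hx
    simp at this
    simp; omega
  rw [merge_all_lt]
  · congr 1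
    conv_rhs => rw [← filter_split i l hl]
    rw [List.map_append, e1, e2]
  · intro a ha b hb
    have ha' := List.of_mem_filter ha
    simp at ha'
    simp only [List.mem_map] at hb
    obtain ⟨c, hc, rfl⟩ := hb
    have := List.of_mem_filter hc
    simp at this
    omega

theorem upd_app_distrib (i : ℕ) (ℓ₁ ℓ₂ ℓ : List ℕ)
    (h₁ : ℓ₁.Pairwise (· < ·)) (h₂ : ℓ₂.Pairwise (· < ·))
    (h : merge ℓ₁ ℓ₂ = some ℓ) :
    ∃ a₁ a₂ b,
      merge (ℓ₁.filter (fun x => decide (x < i)))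
        ((ℓ₁.filter (fun x => decide (i ≤ x))).map (· + 1)) = some a₁ ∧
      merge (ℓ₂.filter (fun x => decide (x < i)))
        ((ℓ₂.filter (fun x => decide (i ≤ x))).map (· + 1)) = some a₂ ∧
      merge a₁ a₂ = some b ∧
      merge (ℓ.filter (fun x => decide (x < i)))
        ((ℓ.filter (fun x => decide (i ≤ x))).map (· + 1)) = some b := by
  set f : ℕ → ℕ := fun x => if x < i then x else x + 1 with hf_def
  have hf : StrictMono f := by
    intro x y hxy
    simp only [hf_def]
    split <;> split <;> omega
  refine ⟨ℓ₁.map f, ℓ₂.map f, ℓ.map f, upd_eq i ℓ₁ h₁, upd_eq i ℓ₂ h₂, ?_, ?_⟩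
  · rw [merge_map f hf, h]; rfl
  · exact upd_eq i ℓ (merge_sorted ℓ₁ ℓ₂ ℓ h₁ h₂ h)
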